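/- arXiv:2402.01022 — 4 statements merged into one kernel-verified Lean document; each statement's English description precedes it below -/
import Mathlib

section
/- Let A be a unital C*-algebra and let a_1, ..., a_n be self-adjoint elements of A. Then the left ideal generated by a_1, ..., a_n is all of A if and only if the element a_1^2 + ... + a_n^2 is invertible in A. -/
open Filter Topology MultiplierAlgebra

noncomputable section

/-- Real rank at most `n` for a unital normed star ring: unimodular self-adjoint
`(n+1)`-tuples are dense in the self-adjoint `(n+1)`-tuples. -/
def RealRankLe (A : Type*) [NormedRing A] [StarRing A] (n : ℕ) : Prop :=
  ∀ (a : Fin (n + 1) → A), (∀ i, IsSelfAdjoint (a i)) → ∀ ε > 0,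
    ∃ b : Fin (n + 1) → A, (∀ i, IsSelfAdjoint (b i)) ∧
      IsUnit (∑ i, b i ^ 2) ∧ ∀ i, ‖a i - b i‖ < ε

/-- The real rank of a unital normed star ring, as an element of `ℕ∞`. -/
def unitalRealRank (A : Type*) [NormedRing A] [StarRing A] : ℕ∞ :=
  sInf {n : ℕ∞ | ∃ m : ℕ, n = m ∧ RealRankLe A m}

/-- The real rank of a (possibly nonunital) C*-algebra: the real rank of its
minimal unitization. -/
def realRank (A : Type*) [NonUnitalCStarAlgebra A] : ℕ∞ :=
  unitalRealRank (Unitization ℂ A)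

/-- A sequential two-sided approximate unit. -/
def IsApproxUnit {E : Type*} [NonUnitalNormedRing E] (u : ℕ → E) : Prop :=
  ∀ x : E, Tendsto (fun k => u k * x) atTop (𝓝 x) ∧ Tendsto (fun k => x * u k) atTop (𝓝 x)

/-- A C*-algebra is σ-unital if it has a countable (sequential) approximate unit. -/
def SigmaUnital (E : Type*) [NonUnitalNormedRing E] : Prop :=
  ∃ u : ℕ → E, IsApproxUnit u

variable (A : Type*) [NonUnitalCStarAlgebra A]

/-- The canonical image of `A` in its multiplier algebra `𝓜(ℂ, A)`. -/
def multIdeal : Set 𝓜(ℂ, A) := Set.range (DoubleCentralizer.coeHom (𝕜 := ℂ) (A := A))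

/-- Property `(Λ_n)` of Thiel: tuples in the multiplier algebra that are unimodular
modulo `A` can be approximated by unimodular tuples agreeing with them modulo `A`. -/
def LambdaProp (n : ℕ) : Prop :=
  ∀ a : Fin (n + 1) → 𝓜(ℂ, A), (∀ i, IsSelfAdjoint (a i)) →
    (∃ z : 𝓜(ℂ, A), z * (∑ i, a i ^ 2) - 1 ∈ multIdeal A ∧
      (∑ i, a i ^ 2) * z - 1 ∈ multIdeal A) →
    ∀ ε > 0, ∃ b : Fin (n + 1) → 𝓜(ℂ, A), (∀ i, IsSelfAdjoint (b i)) ∧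
      IsUnit (∑ i, b i ^ 2) ∧ ∀ i, ‖a i - b i‖ < ε ∧ a i - b i ∈ multIdeal A

/-- The extension real rank `xrr(A)` of a C*-algebra `A`. -/
def extRealRank : ℕ∞ :=
  sInf {n : ℕ∞ | ∃ m : ℕ, n = m ∧ ∀ k, m ≤ k → LambdaProp A k}

/-- Real rank at most `n` for the corona algebra `M(A)/A`, formulated intrinsically in
`M(A)` using the quotient norm (`Metric.infDist` to the ideal) and invertibility modulo
the ideal. -/
def CoronaRealRankLe (n : ℕ) : Prop :=
  ∀ a : Fin (n + 1) → 𝓜(ℂ, A), (∀ i, IsSelfAdjoint (a i)) → ∀ ε > 0,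
    ∃ b : Fin (n + 1) → 𝓜(ℂ, A), (∀ i, IsSelfAdjoint (b i)) ∧
      (∃ z : 𝓜(ℂ, A), z * (∑ i, b i ^ 2) - 1 ∈ multIdeal A ∧
        (∑ i, b i ^ 2) * z - 1 ∈ multIdeal A) ∧
      ∀ i, Metric.infDist (a i - b i) (multIdeal A) < ε

/-- The real rank of the corona algebra `M(A)/A`. -/
def coronaRealRank : ℕ∞ :=
  sInf {n : ℕ∞ | ∃ m : ℕ, n = m ∧ CoronaRealRankLe A m}

/-- `u`, a unitary `n × n` matrix, padded by `1`s to a `k × k` matrix. -/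
def padTo {B : Type*} [Ring B] {n : ℕ} (u : Matrix (Fin n) (Fin n) B) (k : ℕ)
    (h : n ≤ k) : Matrix (Fin k) (Fin k) B :=
  Matrix.reindex (finSumFinEquiv.trans (finCongr (Nat.add_sub_cancel' h)))
    (finSumFinEquiv.trans (finCongr (Nat.add_sub_cancel' h)))
    (Matrix.fromBlocks u 0 0 1)

/-- Triviality of the K₁-group of a C*-algebra, formulated concretely: every unitary
matrix over the unitization becomes connected to the identity through unitaries after
padding by `1`s. -/
def K1Trivial : Prop :=
  ∀ (n : ℕ) (u : Matrix (Fin n) (Fin n) (Unitization ℂ A)),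
    u ∈ unitary (Matrix (Fin n) (Fin n) (Unitization ℂ A)) →
    ∃ (k : ℕ) (h : n ≤ k),
      JoinedIn {w | w ∈ unitary (Matrix (Fin k) (Fin k) (Unitization ℂ A))}
        (padTo u k h) 1

end

/-! If `∑ cᵢ aᵢ = 1`, expanding `0 ≤ ∑ (aᵢ - μ cᵢ⋆)⋆ (aᵢ - μ cᵢ⋆)` gives
`∑ aᵢ⋆ aᵢ ≥ 2μ - μ² ∑ cᵢ cᵢ⋆ ≥ μ` once `μ ‖∑ cᵢ cᵢ⋆‖ ≤ 1`, and an element dominating a positive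
scalar is invertible. Conversely, an invertible `∑ aᵢ⋆ aᵢ` lies in the left ideal generated by
the `aᵢ`. -/

section

variable {ι : Type*}

lemma sum_mul_add_star_sum_mul_le {R : Type*} [NonUnitalRing R] [PartialOrder R] [StarRing R]
    [StarOrderedRing R] (s : Finset ι) (a c : ι → R) :
    ∑ i ∈ s, c i * a i + star (∑ i ∈ s, c i * a i) ≤
      ∑ i ∈ s, star (a i) * a i + ∑ i ∈ s, c i * star (c i) := by
  have h : 0 ≤ ∑ i ∈ s, star (a i - star (c i)) * (a i - star (c i)) :=
    Finset.sum_nonneg fun i _ => star_mul_self_nonneg _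
  simp only [star_sub, star_star, sub_mul, mul_sub, Finset.sum_sub_distrib] at h
  rw [← sub_nonneg]
  convert h using 1
  simp only [star_sum, star_mul]
  abel

theorem CStarAlgebra.isUnit_sum_star_mul_self_of_sum_mul_eq_one {A : Type*} [CStarAlgebra A]
    [PartialOrder A] [StarOrderedRing A] (s : Finset ι) {a c : ι → A}
    (h : ∑ i ∈ s, c i * a i = 1) : IsUnit (∑ i ∈ s, star (a i) * a i) := by
  set t := ∑ i ∈ s, c i * star (c i)
  set μ : ℝ := (‖t‖ + 1)⁻¹
  have hμ : 0 < μ := by positivity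
  have hμt : μ * ‖t‖ ≤ 1 := by
    rw [inv_mul_le_one₀ (by positivity)]
    linarith
  have ht : t ≤ algebraMap ℝ A ‖t‖ :=
    (isSelfAdjoint_sum s fun i _ => .mul_star_self (c i)).le_algebraMap_norm_self
  have hμ_sq : (μ * μ) • t ≤ μ • (1 : A) := calc
    (μ * μ) • t ≤ (μ * μ) • algebraMap ℝ A ‖t‖ := smul_le_smul_of_nonneg_left ht (by positivity)
    _ = μ • (μ * ‖t‖) • (1 : A) := by
      rw [Algebra.algebraMap_eq_smul_one, smul_smul, smul_smul, mul_assoc]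
    _ ≤ μ • (1 : A) := smul_le_smul_of_nonneg_left
        (by simpa using smul_le_smul_of_nonneg_right hμt (zero_le_one' A)) hμ.le
  have key := sum_mul_add_star_sum_mul_le s a (fun i => μ • c i)
  simp only [smul_mul_assoc, mul_smul_comm, smul_smul, star_smul, star_trivial,
    ← Finset.smul_sum, h, star_one] at key
  refine isUnit_of_le (algebraMap ℝ A μ) ?_ (isStrictlyPositive_algebraMap hμ)
  rw [Algebra.algebraMap_eq_smul_one]
  exact le_of_add_le_add_right (key.trans (by gcongr))

theorem CStarAlgebra.span_range_eq_top_iff_isUnit_sum_star_mul_self {A : Type*}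
    [CStarAlgebra A] [Fintype ι] (a : ι → A) :
    Submodule.span A (Set.range a) = ⊤ ↔ IsUnit (∑ i, star (a i) * a i) := by
  refine ⟨fun h => ?_, fun h => Ideal.eq_top_of_isUnit_mem _ ?_ h⟩
  · obtain ⟨c, hc⟩ := (Submodule.mem_span_range_iff_exists_fun A).1 (h ▸ Submodule.mem_top :
      (1 : A) ∈ Submodule.span A (Set.range a))
    let := CStarAlgebra.spectralOrder A
    have := CStarAlgebra.spectralOrderedRing A
    exact isUnit_sum_star_mul_self_of_sum_mul_eq_one Finset.univ hc
  · exact Submodule.sum_mem _ fun i _ => Submodule.smul_mem _ _ (Submodule.subset_span ⟨i, rfl⟩)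

end

/-- In a unital C*-algebra, a self-adjoint tuple generates `A` as a left
ideal if and only if the sum of the squares of its entries is invertible. -/
theorem selfAdjoint_span_eq_top_iff_isUnit_sum_sq {A : Type*} [CStarAlgebra A] {n : ℕ}
    (a : Fin n → A) (ha : ∀ i, IsSelfAdjoint (a i)) :
    Submodule.span A (Set.range a) = ⊤ ↔ IsUnit (∑ i, a i ^ 2) := by
  have h_sq : ∑ i, a i ^ 2 = ∑ i, star (a i) * a i := by simp only [sq, (ha _).star_eq]
  rw [h_sq]
  exact CStarAlgebra.span_range_eq_top_iff_isUnit_sum_star_mul_self a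
end

section
/- Let E be a C*-algebra, A a closed two-sided ideal of E, and set J = A** ∩ M(E) inside E**. Then J is contained in the multiplier algebra M(A), and J is a hereditary sub-C*-algebra of M(A): for all x, y ∈ J and z ∈ M(A), the element xzy belongs to J. -/
open Filter Topology MultiplierAlgebra

section

variable {M : Type*} [Semigroup M]

def multiplierSet (S E : Set M) : Set M := {x ∈ S | ∀ e ∈ E, x * e ∈ E ∧ e * x ∈ E}

variable {E I : Set M} (hI : ∀ x ∈ I, ∀ w, x * w ∈ I ∧ w * x ∈ I)
include hI

theorem mul_mem_inter_of_mem_multiplierSet {x e : M} (hx : x ∈ multiplierSet I E) (he : e ∈ E) :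
    x * e ∈ E ∩ I ∧ e * x ∈ E ∩ I :=
  ⟨⟨(hx.2 e he).1, (hI x hx.1 e).1⟩, ⟨(hx.2 e he).2, (hI x hx.1 e).2⟩⟩

theorem multiplierSet_subset_multiplierSet_inter :
    multiplierSet I E ⊆ multiplierSet I (E ∩ I) :=
  fun _ hx => ⟨hx.1, fun _ ha => mul_mem_inter_of_mem_multiplierSet hI hx ha.1⟩

theorem mul_mul_mem_multiplierSet {x y z : M} (hx : x ∈ multiplierSet I E)
    (hz : z ∈ multiplierSet I (E ∩ I)) (hy : y ∈ multiplierSet I E) :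
    x * z * y ∈ multiplierSet I E := by
  refine ⟨mul_assoc x z y ▸ (hI x hx.1 _).1, fun e he => ⟨?_, ?_⟩⟩
  · have hzye : z * (y * e) ∈ E :=
      (hz.2 _ (mul_mem_inter_of_mem_multiplierSet hI hy he).1).1.1
    simpa only [mul_assoc] using (hx.2 _ hzye).1
  · have hexz : e * x * z ∈ E :=
      (hz.2 _ (mul_mem_inter_of_mem_multiplierSet hI hx he).2).2.1
    simpa only [mul_assoc] using (hy.2 _ hexz).2

end

/-- `W` stands for `E**` and `AW` for `A**`, so `J = multiplierSet AW E` and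
`M(A) = multiplierSet AW A`. -/
theorem bidual_inter_multiplier_hereditary_general {W : Type*} [CStarAlgebra W] (E A AW : Set W)
    (hAW : ∀ x ∈ AW, ∀ w : W, x * w ∈ AW ∧ w * x ∈ AW)
    (hA : A = E ∩ AW) :
    {x ∈ AW | ∀ e ∈ E, x * e ∈ E ∧ e * x ∈ E} ⊆
        {x ∈ AW | ∀ a ∈ A, x * a ∈ A ∧ a * x ∈ A} ∧
      ∀ x ∈ {x ∈ AW | ∀ e ∈ E, x * e ∈ E ∧ e * x ∈ E},
        ∀ z ∈ {x ∈ AW | ∀ a ∈ A, x * a ∈ A ∧ a * x ∈ A},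
          ∀ y ∈ {x ∈ AW | ∀ e ∈ E, x * e ∈ E ∧ e * x ∈ E},
            x * z * y ∈ {x ∈ AW | ∀ e ∈ E, x * e ∈ E ∧ e * x ∈ E} := by
  subst hA
  exact ⟨multiplierSet_subset_multiplierSet_inter hAW,
    fun _ hx _ hz _ hy => mul_mul_mem_multiplierSet hAW hx hz hy⟩

/-- With `W = E**`, `AW = A**` a two-sided ideal of `W`, `A = E ∩ AW`, the
set `J = AW ∩ M(E)` (where `M(E) = {x : xE + Ex ⊆ E}`) is contained in
`M(A) = {x ∈ AW : xA + Ax ⊆ A}` and is a hereditary subalgebra of `M(A)`. -/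
theorem bidual_inter_multiplier_hereditary {W : Type*} [CStarAlgebra W] (E A AW : Set W)
    (hEmul : ∀ x ∈ E, ∀ y ∈ E, x * y ∈ E) (hEadd : ∀ x ∈ E, ∀ y ∈ E, x + y ∈ E)
    (hEstar : ∀ x ∈ E, star x ∈ E) (hEclosed : IsClosed E)
    (hAWclosed : IsClosed AW) (hAWstar : ∀ x ∈ AW, star x ∈ AW)
    (hAWadd : ∀ x ∈ AW, ∀ y ∈ AW, x + y ∈ AW)
    (hAW : ∀ x ∈ AW, ∀ w : W, x * w ∈ AW ∧ w * x ∈ AW)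
    (hA : A = E ∩ AW) :
    {x ∈ AW | ∀ e ∈ E, x * e ∈ E ∧ e * x ∈ E} ⊆
        {x ∈ AW | ∀ a ∈ A, x * a ∈ A ∧ a * x ∈ A} ∧
      ∀ x ∈ {x ∈ AW | ∀ e ∈ E, x * e ∈ E ∧ e * x ∈ E},
        ∀ z ∈ {x ∈ AW | ∀ a ∈ A, x * a ∈ A ∧ a * x ∈ A},
          ∀ y ∈ {x ∈ AW | ∀ e ∈ E, x * e ∈ E ∧ e * x ∈ E},
            x * z * y ∈ {x ∈ AW | ∀ e ∈ E, x * e ∈ E ∧ e * x ∈ E} :=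
  bidual_inter_multiplier_hereditary_general E A AW hAW hA
end

section
/- Let E be a σ-unital C*-algebra and let L ⊆ M(E) be a separable sub-C*-algebra of the multiplier algebra of E. Then there exists a separable sub-C*-algebra D ⊆ E containing an approximate unit for E such that every element of L multiplies D into D, i.e., L ⊆ { x ∈ M(E) : xD + Dx ⊆ D }. -/
open Filter Topology MultiplierAlgebra

/-!
Close the approximate unit `{uₙ}` under sums, products, adjoints, multiplication by a countable
dense set of scalars, and left and right multiplication by a countable dense subset `T` of `L`.
The result is countable, so its closure `D` is separable, and `D` is a C⋆-subalgebra containing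
`{uₙ}`. Since `(x, d) ↦ x d` and `(x, d) ↦ d x` are jointly continuous on `M(E) × E`,
invariance of `D` under `T` passes to `closure T ⊇ L`.
-/

open Set

theorem Set.Countable.exists_superset_closed_under {α : Type*} {s : Set α} (hs : s.Countable)
    {U : Set (α → α)} (hU : U.Countable) {B : Set (α → α → α)} (hB : B.Countable) :
    ∃ t, s ⊆ t ∧ t.Countable ∧ (∀ f ∈ U, MapsTo f t t) ∧
      ∀ g ∈ B, ∀ a ∈ t, ∀ b ∈ t, g a b ∈ t := by
  let step : Set α → Set α := fun t => t ∪ (⋃ f ∈ U, f '' t) ∪ ⋃ g ∈ B, Set.image2 g t t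
  let t : ℕ → Set α := fun n => step^[n] s
  have ht_succ (n : ℕ) : t (n + 1) = step (t n) := Function.iterate_succ_apply' step n s
  have ht_mono : Monotone t :=
    monotone_nat_of_le_succ fun n => ht_succ n ▸ subset_union_left.trans subset_union_left
  refine ⟨⋃ n, t n, subset_iUnion t 0, countable_iUnion fun n => ?_, ?_, ?_⟩
  · induction n with
    | zero => exact hs
    | succ n ih =>
      rw [ht_succ]
      exact (ih.union (hU.biUnion fun f _ => ih.image f)).union
        (hB.biUnion fun g _ => ih.image2 ih g)
  · intro f hf a ha
    obtain ⟨n, hn⟩ := mem_iUnion.1 ha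
    exact mem_iUnion.2
      ⟨n + 1, ht_succ n ▸ Or.inl (Or.inr (mem_biUnion hf (mem_image_of_mem f hn)))⟩
  · intro g hg a ha b hb
    obtain ⟨m, hm⟩ := mem_iUnion.1 ha
    obtain ⟨n, hn⟩ := mem_iUnion.1 hb
    refine mem_iUnion.2 ⟨max m n + 1, ht_succ _ ▸ Or.inr (mem_biUnion hg ?_)⟩
    exact mem_image2_of_mem (ht_mono (le_max_left m n) hm) (ht_mono (le_max_right m n) hn)

namespace CStarRing

variable {A : Type*} [NonUnitalNormedRing A] [StarRing A] [CStarRing A]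

theorem eq_of_forall_mul_left_eq {y z : A} (h : ∀ c, c * y = c * z) : y = z := by
  have : star (y - z) * (y - z) = 0 := by rw [mul_sub, h, sub_self]
  exact sub_eq_zero.1 ((star_mul_self_eq_zero_iff _).1 this)

theorem eq_of_forall_mul_right_eq {y z : A} (h : ∀ c, y * c = z * c) : y = z := by
  have : (y - z) * star (y - z) = 0 := by rw [sub_mul, h, sub_self]
  exact sub_eq_zero.1 ((mul_star_self_eq_zero_iff _).1 this)

end CStarRing

namespace DoubleCentralizer

variable {𝕜 A : Type*} [NontriviallyNormedField 𝕜] [NonUnitalNormedRing A] [NormedSpace 𝕜 A]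
  [SMulCommClass 𝕜 A A] [IsScalarTower 𝕜 A A]

theorem continuous_toProd : Continuous (toProd : 𝓜(𝕜, A) → (A →L[𝕜] A) × (A →L[𝕜] A)) :=
  (AddMonoidHomClass.isometry_of_norm toProdHom fun x => (norm_def x).symm).continuous

theorem continuous_fst_apply : Continuous fun p : 𝓜(𝕜, A) × A => p.1.fst p.2 :=
  (continuous_toProd.fst.comp continuous_fst).clm_apply continuous_snd

theorem continuous_snd_apply : Continuous fun p : 𝓜(𝕜, A) × A => p.1.snd p.2 :=
  (continuous_toProd.snd.comp continuous_fst).clm_apply continuous_snd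

theorem fst_mem_closure {T : Set 𝓜(𝕜, A)} {F : Set A} (hF : ∀ x ∈ T, MapsTo x.fst F F)
    {x : 𝓜(𝕜, A)} (hx : x ∈ closure T) {a : A} (ha : a ∈ closure F) : x.fst a ∈ closure F :=
  map_mem_closure₂ (f := fun x : 𝓜(𝕜, A) => ⇑x.fst) continuous_fst_apply hx ha
    fun y hy _ hb => hF y hy hb

theorem snd_mem_closure {T : Set 𝓜(𝕜, A)} {F : Set A} (hF : ∀ x ∈ T, MapsTo x.snd F F)
    {x : 𝓜(𝕜, A)} (hx : x ∈ closure T) {a : A} (ha : a ∈ closure F) : x.snd a ∈ closure F :=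
  map_mem_closure₂ (f := fun x : 𝓜(𝕜, A) => ⇑x.snd) continuous_snd_apply hx ha
    fun y hy _ hb => hF y hy hb

variable [StarRing A] [CStarRing A]

theorem fst_mul (x : 𝓜(𝕜, A)) (a b : A) : x.fst (a * b) = x.fst a * b :=
  CStarRing.eq_of_forall_mul_left_eq fun c => by
    rw [← x.central, ← mul_assoc, x.central, mul_assoc]

theorem snd_mul (x : 𝓜(𝕜, A)) (a b : A) : x.snd (a * b) = a * x.snd b :=
  CStarRing.eq_of_forall_mul_right_eq fun c => by
    rw [x.central, mul_assoc, ← x.central, mul_assoc]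

theorem mul_coe (x : 𝓜(𝕜, A)) (a : A) : x * (a : 𝓜(𝕜, A)) = (x.fst a : 𝓜(𝕜, A)) :=
  ext 𝕜 A _ _ <| Prod.ext (ContinuousLinearMap.ext fun b => fst_mul x a b)
    (ContinuousLinearMap.ext fun b => x.central b a)

theorem coe_mul (x : 𝓜(𝕜, A)) (a : A) : (a : 𝓜(𝕜, A)) * x = (x.snd a : 𝓜(𝕜, A)) :=
  ext 𝕜 A _ _ <| Prod.ext (ContinuousLinearMap.ext fun b => (x.central a b).symm)
    (ContinuousLinearMap.ext fun b => snd_mul x b a)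

end DoubleCentralizer

theorem exists_separable_subalgebra_approxUnit_general {E : Type*} [NonUnitalCStarAlgebra E]
    (hσ : SigmaUnital E)
    (L : Set 𝓜(ℂ, E)) (hLsep : TopologicalSpace.IsSeparable L) :
    ∃ D : Set E, TopologicalSpace.IsSeparable D ∧ IsClosed D ∧
      (∀ x ∈ D, ∀ y ∈ D, x + y ∈ D ∧ x * y ∈ D) ∧ (∀ x ∈ D, star x ∈ D) ∧
      (∀ (c : ℂ), ∀ x ∈ D, c • x ∈ D) ∧
      (∃ u : ℕ → E, IsApproxUnit u ∧ ∀ n, u n ∈ D) ∧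
      ∀ x ∈ L, ∀ d ∈ D,
        x * (DoubleCentralizer.coeHom (𝕜 := ℂ) (A := E) d) ∈
            (DoubleCentralizer.coeHom (𝕜 := ℂ) (A := E)) '' D ∧
          (DoubleCentralizer.coeHom (𝕜 := ℂ) (A := E) d) * x ∈
            (DoubleCentralizer.coeHom (𝕜 := ℂ) (A := E)) '' D := by
  obtain ⟨u, hu⟩ := hσ
  obtain ⟨T, hTc, hLT⟩ := hLsep
  obtain ⟨Q, hQc, hQd⟩ := TopologicalSpace.exists_countable_dense ℂ
  obtain ⟨F, huF, hFc, hFU, hFB⟩ := (countable_range u).exists_superset_closed_under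
    (U := insert star ((fun (q : ℂ) (a : E) => q • a) '' Q ∪
      (fun x : 𝓜(ℂ, E) => ⇑x.fst) '' T ∪ (fun x : 𝓜(ℂ, E) => ⇑x.snd) '' T))
    ((((hQc.image _).union (hTc.image _)).union (hTc.image _)).insert _)
    (B := {(· + ·), (· * ·)}) ((countable_singleton _).insert _)
  refine ⟨closure F, hFc.isSeparable.closure, isClosed_closure,
    fun a ha b hb => ⟨?_, ?_⟩, fun a ha => ?_, fun c a ha => ?_,
    ⟨u, hu, fun n => subset_closure (huF (mem_range_self n))⟩, fun x hx d hd => ⟨?_, ?_⟩⟩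
  · exact map_mem_closure₂ continuous_add ha hb (hFB _ (by simp))
  · exact map_mem_closure₂ continuous_mul ha hb (hFB _ (by simp))
  · exact map_mem_closure continuous_star ha (hFU _ (mem_insert _ _))
  · exact map_mem_closure₂ continuous_smul (hQd c) ha fun q hq =>
      hFU _ (Or.inr (Or.inl (Or.inl ⟨q, hq, rfl⟩)))
  · exact ⟨x.fst d, DoubleCentralizer.fst_mem_closure
      (fun y hy => hFU _ (Or.inr (Or.inl (Or.inr ⟨y, hy, rfl⟩)))) (hLT hx) hd,
      (DoubleCentralizer.mul_coe x d).symm⟩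
  · exact ⟨x.snd d, DoubleCentralizer.snd_mem_closure
      (fun y hy => hFU _ (Or.inr (Or.inr ⟨y, hy, rfl⟩))) (hLT hx) hd,
      (DoubleCentralizer.coe_mul x d).symm⟩

/-- Separable reduction for multiplier algebras: if `E` is σ-unital and
`L ⊆ 𝓜(ℂ, E)` is a separable sub-C*-algebra, then there is a separable sub-C*-algebra
`D ⊆ E` containing an approximate unit for `E` such that every element of `L` multiplies
`D` into `D`. -/
theorem exists_separable_subalgebra_approxUnit {E : Type*} [NonUnitalCStarAlgebra E]
    (hσ : SigmaUnital E)
    (L : Set 𝓜(ℂ, E)) (hLsep : TopologicalSpace.IsSeparable L)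
    (hLadd : ∀ x ∈ L, ∀ y ∈ L, x + y ∈ L) (hLmul : ∀ x ∈ L, ∀ y ∈ L, x * y ∈ L)
    (hLstar : ∀ x ∈ L, star x ∈ L) (hLsmul : ∀ (c : ℂ), ∀ x ∈ L, c • x ∈ L)
    (hLclosed : IsClosed L) :
    ∃ D : Set E, TopologicalSpace.IsSeparable D ∧ IsClosed D ∧
      (∀ x ∈ D, ∀ y ∈ D, x + y ∈ D ∧ x * y ∈ D) ∧ (∀ x ∈ D, star x ∈ D) ∧
      (∀ (c : ℂ), ∀ x ∈ D, c • x ∈ D) ∧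
      (∃ u : ℕ → E, IsApproxUnit u ∧ ∀ n, u n ∈ D) ∧
      ∀ x ∈ L, ∀ d ∈ D,
        x * (DoubleCentralizer.coeHom (𝕜 := ℂ) (A := E) d) ∈
            (DoubleCentralizer.coeHom (𝕜 := ℂ) (A := E)) '' D ∧
          (DoubleCentralizer.coeHom (𝕜 := ℂ) (A := E) d) * x ∈
            (DoubleCentralizer.coeHom (𝕜 := ℂ) (A := E)) '' D :=
  exists_separable_subalgebra_approxUnit_general hσ L hLsep
end

section
/- Let A be a unital C*-algebra with real rank zero in the sense that invertible self-adjoint elements are dense in the self-adjoint part of A, and let p ∈ A be a projection. Then the corner pAp also has the property that invertible self-adjoint elements (invertible in pAp with unit p) are dense in the self-adjoint part of pAp. -/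
open Filter Topology MultiplierAlgebra

/-! Perturb `x + (1 - p)`, which is self-adjoint and block diagonal with respect to
`p, 1 - p`, to a self-adjoint invertible `b`. Its corner `(1 - p) b (1 - p)` is then close to
`1 - p`, hence has an inverse `e` in `(1 - p) A (1 - p)` of norm at most `2`. The Schur
complement `p b p - p b (1 - p) e (1 - p) b p` is invertible in `pAp` with inverse `p b⁻¹ p`;
it is self-adjoint because `p b⁻¹ p` is, and it differs from `x` by
`O(‖b - (x + (1 - p))‖)`. -/

section Ring

variable {R : Type*} [Ring R] {p : R}

def schurComplement (p b e : R) : R :=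
  p * b * p - p * b * (1 - p) * e * ((1 - p) * b * p)

namespace IsIdempotentElem

lemma mul_mul_mul_eq_add (hp : IsIdempotentElem p) (i x y j : R) :
    i * (x * y) * j = i * x * p * (p * y * j) + i * x * (1 - p) * ((1 - p) * y * j) := by
  calc i * (x * y) * j = i * x * (p * p + (1 - p) * (1 - p)) * y * j := by
        rw [hp.eq, hp.one_sub.eq]; noncomm_ring
    _ = _ := by noncomm_ring

lemma compressions_sub_add_one_sub {x : R} (hp : IsIdempotentElem p) (hx : p * x * p = x)
    (b : R) :
    p * (b - (x + (1 - p))) * p = p * b * p - x ∧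
      p * (b - (x + (1 - p))) * (1 - p) = p * b * (1 - p) ∧
      (1 - p) * (b - (x + (1 - p))) * p = (1 - p) * b * p ∧
      (1 - p) * (b - (x + (1 - p))) * (1 - p) = (1 - p) * b * (1 - p) - (1 - p) := by
  have hpx : p * x = x := by rw [← hx, ← mul_assoc, ← mul_assoc, hp.eq]
  have hxp : x * p = x := by rw [← hx, mul_assoc, hp.eq]
  have hqx : (1 - p) * x = 0 := by rw [sub_mul, one_mul, hpx, sub_self]
  simp only [mul_sub, sub_mul, mul_add, hpx, hxp, hqx, hp.mul_one_sub_self,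
    hp.one_sub_mul_self, hp.one_sub.eq, mul_one, one_mul, add_zero, zero_add, sub_zero]
  exact ⟨trivial, by abel, trivial, by abel⟩

lemma mul_schurComplement_self (hp : IsIdempotentElem p) (b e : R) :
    p * schurComplement p b e = schurComplement p b e := by
  simp only [schurComplement, mul_sub, ← mul_assoc, hp.eq]

lemma mul_schurComplement_mul_self (hp : IsIdempotentElem p) (b e : R) :
    p * schurComplement p b e * p = schurComplement p b e := by
  rw [hp.mul_schurComplement_self]
  simp only [schurComplement, sub_mul, mul_assoc, hp.eq]

lemma schurComplement_mul_of_mul_eq_one {b c e : R} (hp : IsIdempotentElem p)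
    (hbc : b * c = 1) (he : e * ((1 - p) * b * (1 - p)) = 1 - p) :
    schurComplement p b e * (p * c * p) = p := by
  have hpp := hp.mul_mul_mul_eq_add p b c p
  have hqp := hp.mul_mul_mul_eq_add (1 - p) b c p
  rw [hbc, mul_one, hp.eq] at hpp
  rw [hbc, mul_one, hp.one_sub_mul_self, eq_comm, add_eq_zero_iff_eq_neg] at hqp
  calc schurComplement p b e * (p * c * p)
      = p * b * p * (p * c * p) - p * b * (1 - p) * e * ((1 - p) * b * p * (p * c * p)) := by
        simp only [schurComplement]; noncomm_ring
    _ = p * b * p * (p * c * p) +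
          p * b * (1 - p) * (e * ((1 - p) * b * (1 - p))) * ((1 - p) * c * p) := by
        rw [hqp]; noncomm_ring
    _ = p * b * p * (p * c * p) + p * b * ((1 - p) * (1 - p)) * ((1 - p) * c * p) := by
        rw [he]; noncomm_ring
    _ = p := by rw [hp.one_sub.eq]; exact hpp.symm

lemma mul_schurComplement_of_mul_eq_one {b c e : R} (hp : IsIdempotentElem p)
    (hcb : c * b = 1) (he : (1 - p) * b * (1 - p) * e = 1 - p) :
    p * c * p * schurComplement p b e = p := by
  have hpp := hp.mul_mul_mul_eq_add p c b p
  have hpq := hp.mul_mul_mul_eq_add p c b (1 - p)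
  rw [hcb, mul_one, hp.eq] at hpp
  rw [hcb, mul_one, hp.mul_one_sub_self, eq_comm, add_eq_zero_iff_eq_neg] at hpq
  calc p * c * p * schurComplement p b e
      = p * c * p * (p * b * p) - p * c * p * (p * b * (1 - p)) * e * ((1 - p) * b * p) := by
        simp only [schurComplement]; noncomm_ring
    _ = p * c * p * (p * b * p) +
          p * c * (1 - p) * ((1 - p) * b * (1 - p) * e) * ((1 - p) * b * p) := by
        rw [hpq]; noncomm_ring
    _ = p * c * p * (p * b * p) + p * c * ((1 - p) * (1 - p)) * ((1 - p) * b * p) := by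
        rw [he]; noncomm_ring
    _ = p := by rw [hp.one_sub.eq]; exact hpp.symm

end IsIdempotentElem

end Ring

lemma isSelfAdjoint_of_mul_eq_of_mul_eq {R : Type*} [Semigroup R] [StarMul R] {p y z : R}
    (hp : IsSelfAdjoint p) (hz : IsSelfAdjoint z) (hzy : z * y = p) (hpy : p * y = y) :
    IsSelfAdjoint y := by
  have hyp : star y * p = star y := by rw [← hp.star_eq, ← star_mul, hpy]
  have hyz : star y * z = p := by rw [← hz.star_eq, ← star_mul, hzy, hp.star_eq]
  calc star y = star y * (z * y) := by rw [hzy, hyp]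
    _ = y := by rw [← mul_assoc, hyz, hpy]

lemma IsIdempotentElem.exists_inverse_in_corner {R : Type*} [NormedRing R]
    [HasSummableGeomSeries R] {q a : R} (hq : IsIdempotentElem q) (ha : q * a * q = a)
    (h : ‖a - q‖ < 1) :
    ∃ e : R, e * a = q ∧ a * e = q ∧ ‖e‖ * (1 - ‖a - q‖) ≤ ‖q‖ := by
  have hqa : q * a = a := by rw [← ha, ← mul_assoc, ← mul_assoc, hq.eq]
  have haq : a * q = a := by rw [← ha, mul_assoc, hq.eq]
  obtain ⟨⟨w, v, hwv, hvw⟩, hw⟩ := isUnit_one_sub_of_norm_lt_one (x := -(a - q))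
    (by rwa [norm_neg])
  simp only [sub_neg_eq_add] at hw
  have hwq : w * q = a := by rw [hw, add_mul, one_mul, sub_mul, haq, hq.eq, add_sub_cancel]
  have hqw : q * w = a := by rw [hw, mul_add, mul_one, mul_sub, hqa, hq.eq, add_sub_cancel]
  refine ⟨v * q, ?_, ?_, ?_⟩
  · rw [mul_assoc, hqa, ← hwq, ← mul_assoc, hvw, one_mul]
  · rw [← hqw, mul_assoc, ← mul_assoc w, hwv, one_mul, hq.eq]
  · have he : v * q + (a - q) * (v * q) = q := by
      rw [← one_add_mul, ← hw, ← mul_assoc, hwv, one_mul]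
    have : ‖v * q‖ ≤ ‖q‖ + ‖a - q‖ * ‖v * q‖ :=
      calc ‖v * q‖ = ‖q - (a - q) * (v * q)‖ := congrArg norm (eq_sub_of_add_eq he)
        _ ≤ ‖q‖ + ‖(a - q) * (v * q)‖ := norm_sub_le _ _
        _ ≤ ‖q‖ + ‖a - q‖ * ‖v * q‖ := by grw [norm_mul_le]
    linarith

lemma IsStarProjection.norm_mul_mul_le {E : Type*} [NonUnitalNormedRing E] [StarRing E]
    [CStarRing E] {p q : E} (hp : IsStarProjection p) (hq : IsStarProjection q) (t : E) :
    ‖p * t * q‖ ≤ ‖t‖ :=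
  calc ‖p * t * q‖ ≤ ‖p‖ * ‖t‖ * ‖q‖ := norm_mul₃_le
    _ ≤ 1 * ‖t‖ * 1 := by gcongr <;> exact IsStarProjection.norm_le _ ‹_›
    _ = ‖t‖ := by ring

lemma IsStarProjection.norm_sub_schurComplement_le {A : Type*} [NormedRing A] [StarRing A]
    [CStarRing A] {p x : A} (hp : IsStarProjection p) (hx : p * x * p = x) (b e : A) :
    ‖x - schurComplement p b e‖ ≤
      ‖b - (x + (1 - p))‖ * (1 + ‖e‖ * ‖b - (x + (1 - p))‖) := by
  set t := b - (x + (1 - p))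
  obtain ⟨hpp, hpq, hqp, -⟩ := hp.isIdempotentElem.compressions_sub_add_one_sub hx b
  have hq := hp.one_sub
  have hdiff :
      x - schurComplement p b e = -(p * t * p) + p * t * (1 - p) * e * ((1 - p) * t * p) := by
    rw [schurComplement, hpp, hpq, hqp]; abel
  calc ‖x - schurComplement p b e‖
      ≤ ‖p * t * p‖ + ‖p * t * (1 - p)‖ * ‖e‖ * ‖(1 - p) * t * p‖ := by
        rw [hdiff]
        exact (norm_add_le _ _).trans (by rw [norm_neg]; gcongr; exact norm_mul₃_le)
    _ ≤ ‖t‖ + ‖t‖ * ‖e‖ * ‖t‖ := by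
        grw [hp.norm_mul_mul_le hp, hp.norm_mul_mul_le hq, hq.norm_mul_mul_le hp]
    _ = ‖t‖ * (1 + ‖e‖ * ‖t‖) := by ring

/-- If invertible self-adjoint elements are dense in `A_sa` (real rank
zero) and `p` is a projection, then self-adjoint elements of the corner `pAp` that are
invertible in `pAp` (with unit `p`) are dense in the self-adjoint part of `pAp`. -/
theorem corner_realRankZero {A : Type*} [CStarAlgebra A]
    (h : ∀ a : A, IsSelfAdjoint a → ∀ ε > 0,
      ∃ b : A, IsSelfAdjoint b ∧ IsUnit b ∧ ‖a - b‖ < ε)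
    (p : A) (hpsa : IsSelfAdjoint p) (hp2 : p * p = p) :
    ∀ x : A, p * x * p = x → IsSelfAdjoint x → ∀ ε > 0,
      ∃ y : A, p * y * p = y ∧ IsSelfAdjoint y ∧
        (∃ z : A, p * z * p = z ∧ y * z = p ∧ z * y = p) ∧ ‖x - y‖ < ε := by
  intro x hx hxsa ε hε
  have hp : IsStarProjection p := ⟨hp2, hpsa⟩
  have hq := hp.one_sub
  obtain ⟨b, hbsa, hbu, hb⟩ :=
    h (x + (1 - p)) (hxsa.add hq.isSelfAdjoint) (min (ε / 2) (1 / 4)) (by positivity)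
  rw [norm_sub_rev, lt_min_iff] at hb
  obtain ⟨c, hbc, hcb⟩ := isUnit_iff_exists.mp hbu
  obtain ⟨-, -, -, hqbq⟩ := hp.isIdempotentElem.compressions_sub_add_one_sub hx b
  have hs : ‖(1 - p) * b * (1 - p) - (1 - p)‖ < 1 / 4 := by
    rw [← hqbq]; linarith [hq.norm_mul_mul_le hq (b - (x + (1 - p)))]
  obtain ⟨e, he₁, he₂, he⟩ := hq.isIdempotentElem.exists_inverse_in_corner
    (a := (1 - p) * b * (1 - p))
    (by simp only [mul_assoc, hq.isIdempotentElem.eq, hq.isIdempotentElem.mul_self_mul])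
    (by linarith)
  have he_le : ‖e‖ ≤ 2 := by
    nlinarith [mul_le_mul_of_nonneg_left hs.le (norm_nonneg e), IsStarProjection.norm_le _ hq]
  have hpcp : IsSelfAdjoint (p * c * p) :=
    (isSelfAdjoint_of_mul_eq_of_mul_eq (.one A) hbsa hbc (one_mul c)).conjugate_self hpsa
  refine ⟨schurComplement p b e, hp.isIdempotentElem.mul_schurComplement_mul_self b e,
    isSelfAdjoint_of_mul_eq_of_mul_eq hpsa hpcp
      (hp.isIdempotentElem.mul_schurComplement_of_mul_eq_one hcb he₂)
      (hp.isIdempotentElem.mul_schurComplement_self b e),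
    ⟨p * c * p, by simp only [mul_assoc, hp2, hp.isIdempotentElem.mul_self_mul],
      hp.isIdempotentElem.schurComplement_mul_of_mul_eq_one hbc he₁,
      hp.isIdempotentElem.mul_schurComplement_of_mul_eq_one hcb he₂⟩, ?_⟩
  calc ‖x - schurComplement p b e‖
      ≤ ‖b - (x + (1 - p))‖ * (1 + ‖e‖ * ‖b - (x + (1 - p))‖) :=
        hp.norm_sub_schurComplement_le hx b e
    _ ≤ ‖b - (x + (1 - p))‖ * (1 + 2 * (1 / 4)) := by gcongr; exact hb.2.le
    _ < ε := by linarith [hb.1]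
end
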